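/- arXiv:1608.00461 — 5 statements merged into one kernel-verified Lean document; each statement's English description precedes it below -/
import Mathlib

section
/- Let Λ be a locally finite connected graph and H ≤ Aut(Λ) a closed subgroup. Let π be a set of primes and r ≥ 0. Suppose the pointwise stabilizer in H of the ball B(v,r) is a pro-π group for every vertex v. Then for every k ≥ r+1 and every vertex v, the pointwise stabilizer in the k-closure of H of the ball B(v,r) is a pro-π group. -/
open SimpleGraph

/-- The permutation topology (topology of pointwise convergence on vertices, the vertex
set being discrete) on the automorphism group of a graph. -/
instance graphAutTopology {V : Type*} {G : SimpleGraph V} : TopologicalSpace (G ≃g G) :=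
  TopologicalSpace.induced (fun g : G ≃g G => (g : V → V))
    (@Pi.topologicalSpace V (fun _ => V) (fun _ => ⊥))

/-- The `k`-closure of a group `J` of automorphisms of a graph `G`: all automorphisms
agreeing with some element of `J` on every ball of radius `k`. -/
def kClosure {V : Type*} (G : SimpleGraph V) (J : Subgroup (G ≃g G)) (k : ℕ) :
    Set (G ≃g G) :=
  {g | ∀ v : V, ∃ h ∈ J, ∀ x : V, G.dist v x ≤ k → g x = h x}

/-- The pointwise stabilizer, in a subgroup `H` of the automorphism group of a graph `G`,
of the ball of radius `r` around the vertex `v` (denoted `H_v^{[r]}` in the paper). -/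
def ballStab {V : Type*} (G : SimpleGraph V) (H : Subgroup (G ≃g G)) (v : V) (r : ℕ) :
    Subgroup (G ≃g G) where
  carrier := {g | g ∈ H ∧ ∀ x : V, G.dist v x ≤ r → g x = x}
  one_mem' := ⟨H.one_mem, fun x _ => rfl⟩
  mul_mem' := by
    rintro a b ⟨ha, ha'⟩ ⟨hb, hb'⟩
    refine ⟨H.mul_mem ha hb, fun x hx => ?_⟩
    rw [RelIso.mul_apply, hb' x hx, ha' x hx]
  inv_mem' := by
    rintro a ⟨ha, ha'⟩
    refine ⟨H.inv_mem ha, fun x hx => ?_⟩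
    conv_lhs => rw [← ha' x hx]
    exact a.inv_apply_self x

/-- A subgroup of the automorphism group of a graph acts cocompactly (with finitely many
orbits of vertices). -/
def CocompactOn {V : Type*} (G : SimpleGraph V) (H : Subgroup (G ≃g G)) : Prop :=
  ∃ s : Finset V, ∀ v : V, ∃ h ∈ H, h v ∈ s

/-- A topological group is pro-`π` when each of its finite continuous quotients is a
`π`-group, i.e. every open normal subgroup of finite index has index divisible only by
primes in `π`. -/
def IsProPi (π : Set ℕ) (K : Type*) [Group K] [TopologicalSpace K] : Prop :=
  ∀ N : Subgroup K, IsOpen (N : Set K) → N.Normal → N.FiniteIndex →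
    ∀ p : ℕ, p.Prime → p ∣ N.index → p ∈ π

section Machinery


variable {V : Type*} {G : SimpleGraph V}


variable {V : Type*} {G : SimpleGraph V}

lemma aut_dist (hconn : G.Connected) (g : G ≃g G) (a b : V) :
    G.dist (g a) (g b) = G.dist a b := by
  have key : ∀ (h : G ≃g G) (x y : V), G.dist (h x) (h y) ≤ G.dist x y := by
    intro h x y
    obtain ⟨p, hp⟩ := (hconn x y).exists_walk_length_eq_dist
    calc G.dist (h x) (h y) ≤ (p.map h.toHom).length := SimpleGraph.dist_le _
      _ = p.length := p.length_map _
      _ = G.dist x y := hp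
  refine le_antisymm (key g a b) ?_
  have h2 := key g⁻¹ (g a) (g b)
  rwa [g.inv_apply_self a, g.inv_apply_self b] at h2

lemma ball_finite (hconn : G.Connected) (hlf : ∀ w : V, (G.neighborSet w).Finite)
    (c : V) : ∀ s : ℕ, {y : V | G.dist c y ≤ s}.Finite := by
  intro s
  induction s with
  | zero =>
    refine Set.Finite.subset (Set.finite_singleton c) fun y hy => ?_
    simp only [Set.mem_setOf_eq, Nat.le_zero] at hy
    simp [((hconn.dist_eq_zero_iff).mp hy).symm]
  | succ s ih =>
    refine Set.Finite.subset (ih.union (Set.Finite.biUnion ih fun z _ => hlf z))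
      fun y hy => ?_
    simp only [Set.mem_setOf_eq] at hy
    by_cases h : G.dist c y ≤ s
    · exact Or.inl h
    · have hd : G.dist y c = s + 1 := by
        rw [SimpleGraph.dist_comm]; omega
      obtain ⟨p, hp⟩ := (hconn y c).exists_walk_length_eq_dist
      rw [hd] at hp
      right
      cases p with
      | nil => simp at hp
      | @cons _ z _ hadj q =>
        have h2 := SimpleGraph.dist_le q
        simp only [SimpleGraph.Walk.length_cons] at hp
        rw [SimpleGraph.dist_comm] at h2
        have h3 : z ∈ {y : V | G.dist c y ≤ s} := by
          simp only [Set.mem_setOf_eq]; omega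
        exact Set.mem_biUnion h3 hadj.symm

lemma geo_walk (hconn : G.Connected) {c y : V} (p : G.Walk c y) :
    ∀ i : ℕ, i ≤ p.length → ∃ x : V, G.dist c x ≤ i ∧ G.dist x y + i ≤ p.length := by
  induction p with
  | @nil u =>
    intro i hi
    simp only [SimpleGraph.Walk.length_nil, Nat.le_zero] at hi
    subst hi
    exact ⟨u, by simp [SimpleGraph.dist_self], by simp [SimpleGraph.dist_self]⟩
  | @cons c w y hadj q ih =>
    intro i hi
    cases i with
    | zero =>
      refine ⟨c, by simp [SimpleGraph.dist_self], ?_⟩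
      simpa using SimpleGraph.dist_le (SimpleGraph.Walk.cons hadj q)
    | succ j =>
      simp only [SimpleGraph.Walk.length_cons] at hi
      obtain ⟨x, hx1, hx2⟩ := ih j (by omega)
      have hcw : G.dist c w ≤ 1 := by
        simpa using SimpleGraph.dist_le (SimpleGraph.Walk.cons hadj SimpleGraph.Walk.nil)
      have htri := hconn.dist_triangle (u := c) (v := w) (w := x)
      exact ⟨x, by omega, by simp only [SimpleGraph.Walk.length_cons]; omega⟩

lemma fix_prop (hconn : G.Connected) (g : G ≃g G) (v : V) (r s' : ℕ)
    (h0 : ∀ y, G.dist v y ≤ r → g y = y)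
    (h1 : ∀ x, G.dist v x ≤ s' → ∀ y, G.dist x y ≤ r + 1 → g y = y) :
    ∀ y, G.dist v y ≤ r + 1 + s' → g y = y := by
  intro y hy
  by_cases hr : G.dist v y ≤ r
  · exact h0 y hr
  · obtain ⟨p, hp⟩ := (hconn v y).exists_walk_length_eq_dist
    obtain ⟨x, hx1, hx2⟩ := geo_walk hconn p (G.dist v y - (r + 1)) (by omega)
    rw [hp] at hx2
    exact h1 x (by omega) y (by omega)

lemma isOpen_fixing {S : Set V} (hS : S.Finite) :
    IsOpen {g : G ≃g G | ∀ y ∈ S, g y = y} := by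
  letI : TopologicalSpace V := ⊥
  haveI : DiscreteTopology V := ⟨rfl⟩
  have heq : {g : G ≃g G | ∀ y ∈ S, g y = y}
      = (fun g : G ≃g G => (g : V → V)) ⁻¹' (⋂ y ∈ S, {f : V → V | f y = y}) := by
    ext g
    simp
  rw [heq]
  refine IsOpen.preimage continuous_induced_dom ?_
  refine hS.isOpen_biInter fun y _ => ?_
  have : {f : V → V | f y = y} = (fun f : V → V => f y) ⁻¹' {y} := rfl
  rw [this]
  exact (continuous_apply y).isOpen_preimage _ (isOpen_discrete _)



lemma mem_ballStab {H : Subgroup (G ≃g G)} {v : V} {r : ℕ} {g : G ≃g G} :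
    g ∈ ballStab G H v r ↔ g ∈ H ∧ ∀ x : V, G.dist v x ≤ r → g x = x := Iff.rfl

def fixSub (G : SimpleGraph V) (S : Set V) : Subgroup (G ≃g G) where
  carrier := {g | ∀ y ∈ S, g y = y}
  one_mem' := fun y _ => rfl
  mul_mem' := by
    rintro a b ha hb y hy
    rw [RelIso.mul_apply, hb y hy, ha y hy]
  inv_mem' := by
    intro a ha y hy
    conv_lhs => rw [← ha y hy]
    exact a.inv_apply_self y

lemma mem_fixSub {S : Set V} {g : G ≃g G} :
    g ∈ fixSub G S ↔ ∀ y ∈ S, g y = y := Iff.rfl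

def ballsSet (G : SimpleGraph V) (r : ℕ) (L : List V) : Set V :=
  {y | ∃ x ∈ L, G.dist x y ≤ r + 1}

def MGrp (G : SimpleGraph V) (Hk : Subgroup (G ≃g G)) (v : V) (r : ℕ) (L : List V) :
    Subgroup ↥(ballStab G Hk v r) :=
  (fixSub G (ballsSet G r L)).subgroupOf (ballStab G Hk v r)

lemma exists_finset_of_open (K : Subgroup (G ≃g G))
    (N : Subgroup ↥K) (hN : IsOpen (N : Set ↥K)) :
    ∃ I : Finset V, ∀ g : ↥K, (∀ i ∈ I, (g : G ≃g G) i = i) → g ∈ N := by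
  letI : TopologicalSpace V := ⊥
  obtain ⟨U, hU, hUeq⟩ := Topology.IsInducing.subtypeVal.isOpen_iff.mp hN
  have hind : Topology.IsInducing (fun g : G ≃g G => (g : V → V)) := ⟨rfl⟩
  obtain ⟨W, hW, hWeq⟩ := hind.isOpen_iff.mp hU
  have h1W : ((1 : G ≃g G) : V → V) ∈ W := by
    have h1 : ((1 : ↥K) : G ≃g G) ∈ U := by
      exact (Set.ext_iff.mp hUeq (1 : ↥K)).mpr N.one_mem
    rw [← hWeq] at h1
    exact h1
  obtain ⟨I, u, hu, hsub⟩ := isOpen_pi_iff.mp hW _ h1W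
  refine ⟨I, fun g hg => ?_⟩
  have hgW : ((g : G ≃g G) : V → V) ∈ W := by
    apply hsub
    intro i hi
    have := (hu i hi).2
    simpa [hg i hi] using this
  have hgU : ((g : G ≃g G)) ∈ U := by rw [← hWeq]; exact hgW
  exact (Set.ext_iff.mp hUeq g).mp hgU

lemma step_lemma (hconn : G.Connected) (hlf : ∀ w : V, (G.neighborSet w).Finite)
    (H Hk : Subgroup (G ≃g G)) (k : ℕ)
    (hHkeq : (Hk : Set (G ≃g G)) = kClosure G H k)
    (π : Set ℕ) (r : ℕ) (hpro : ∀ x : V, IsProPi π ↥(ballStab G H x r))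
    (hk : r + 1 ≤ k) (v : V) (L : List V) (x : V)
    (hfix : ∀ g : G ≃g G, g ∈ ballStab G Hk v r → g ∈ fixSub G (ballsSet G r L) →
      ∀ y : V, G.dist x y ≤ r → g y = y) :
    ((MGrp G Hk v r (L ++ [x])).subgroupOf (MGrp G Hk v r L)).index ≠ 0 ∧
      ∀ p : ℕ, p.Prime →
        p ∣ ((MGrp G Hk v r (L ++ [x])).subgroupOf (MGrp G Hk v r L)).index → p ∈ π := by
  classical
  set K := ballStab G Hk v r with hK
  set A := ballStab G H x r with hA
  set A' := ballStab G H x (r + 1) with hA'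
  set Nx := A'.subgroupOf A with hNxdef
  have hmemK : ∀ g : ↥(MGrp G Hk v r L), ((g : ↥K) : G ≃g G) ∈ ballStab G Hk v r :=
    fun g => (g : ↥K).2
  have hfixL : ∀ g : ↥(MGrp G Hk v r L),
      ((g : ↥K) : G ≃g G) ∈ fixSub G (ballsSet G r L) :=
    fun g => Subgroup.mem_subgroupOf.mp g.2
  have hfixr : ∀ g : ↥(MGrp G Hk v r L), ∀ y : V, G.dist x y ≤ r →
      ((g : ↥K) : G ≃g G) y = y := fun g => hfix _ (hmemK g) (hfixL g)
  have hgx : ∀ g : ↥(MGrp G Hk v r L), ((g : ↥K) : G ≃g G) x = x :=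
    fun g => hfixr g x (by simp [SimpleGraph.dist_self])
  -- selection from the k-closure
  have selspec : ∀ g : ↥(MGrp G Hk v r L), ∃ h : ↥A,
      ∀ y : V, G.dist x y ≤ k → ((g : ↥K) : G ≃g G) y = (h : G ≃g G) y := by
    intro g
    have hKcl : ((g : ↥K) : G ≃g G) ∈ kClosure G H k := by
      rw [← hHkeq]
      exact (mem_ballStab.mp (hmemK g)).1
    obtain ⟨h, hh, hagree⟩ := hKcl x
    refine ⟨⟨h, mem_ballStab.mpr ⟨hh, fun y hy => ?_⟩⟩, hagree⟩
    rw [← hagree y (le_trans hy (by omega))]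
    exact hfixr g y hy
  choose sel hsel using selspec
  have hselH : ∀ g, ((sel g : ↥A) : G ≃g G) ∈ H := fun g => (mem_ballStab.mp (sel g).2).1
  -- Nx is normal
  haveI hNorm : Nx.Normal := by
    constructor
    intro n hn b
    rw [Subgroup.mem_subgroupOf] at hn ⊢
    rcases mem_ballStab.mp hn with ⟨hnH, hnfix⟩
    have hbA := mem_ballStab.mp b.2
    have hbx : (b : G ≃g G) x = x := hbA.2 x (by simp [SimpleGraph.dist_self])
    refine mem_ballStab.mpr ⟨?_, ?_⟩
    · simp only [Subgroup.coe_mul, Subgroup.coe_inv]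
      exact H.mul_mem (H.mul_mem hbA.1 hnH) (H.inv_mem hbA.1)
    · intro y hy
      simp only [Subgroup.coe_mul, Subgroup.coe_inv, RelIso.mul_apply]
      have hbinvx : ((b : G ≃g G))⁻¹ x = x := by
        conv_lhs => rw [← hbx]
        exact (b : G ≃g G).inv_apply_self x
      have hdy : G.dist x (((b : G ≃g G))⁻¹ y) ≤ r + 1 := by
        have := aut_dist hconn ((b : G ≃g G))⁻¹ x y
        rw [hbinvx] at this
        omega
      rw [hnfix _ hdy]
      exact (b : G ≃g G).apply_inv_self y
  -- the quotient A / Nx is finite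
  have hBall : {y : V | G.dist x y ≤ r + 1}.Finite := ball_finite hconn hlf x (r + 1)
  haveI hBallsub : Finite ↥{y : V | G.dist x y ≤ r + 1} := hBall.to_subtype
  have hmapmem : ∀ (a : ↥A) (z : ↥{y : V | G.dist x y ≤ r + 1}),
      (a : G ≃g G) z ∈ {y : V | G.dist x y ≤ r + 1} := by
    intro a z
    have hax : (a : G ≃g G) x = x := (mem_ballStab.mp a.2).2 x (by simp [SimpleGraph.dist_self])
    have hz := z.2
    simp only [Set.mem_setOf_eq] at hz ⊢
    have h := aut_dist hconn (a : G ≃g G) x (z : V)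
    rw [hax] at h
    omega
  let f : ↥A → (↥{y : V | G.dist x y ≤ r + 1} → ↥{y : V | G.dist x y ≤ r + 1}) :=
    fun a z => ⟨(a : G ≃g G) z, hmapmem a z⟩
  have hfcoset : ∀ a b : ↥A, a⁻¹ * b ∈ Nx → f a = f b := by
    intro a b hab
    rw [Subgroup.mem_subgroupOf] at hab
    have hfix' := (mem_ballStab.mp hab).2
    funext z
    apply Subtype.ext
    show (a : G ≃g G) z = (b : G ≃g G) z
    have h3 : ((a : G ≃g G))⁻¹ ((b : G ≃g G) z) = z := by
      have h4 := hfix' (z : V) z.2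
      simpa [Subgroup.coe_mul, Subgroup.coe_inv, RelIso.mul_apply] using h4
    calc (a : G ≃g G) (z : V) = (a : G ≃g G) (((a : G ≃g G))⁻¹ ((b : G ≃g G) z)) := by
          rw [h3]
      _ = (b : G ≃g G) (z : V) := (a : G ≃g G).apply_inv_self _
  haveI hQfin : Finite (↥A ⧸ Nx) := by
    refine Finite.of_injective
      (fun q : ↥A ⧸ Nx => Quotient.liftOn' q f
        (fun a b hab => hfcoset a b (QuotientGroup.leftRel_apply.mp hab))) ?_
    intro q1 q2
    refine Quotient.inductionOn₂' q1 q2 fun a b hfab => ?_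
    refine Quotient.sound' (QuotientGroup.leftRel_apply.mpr ?_)
    rw [Subgroup.mem_subgroupOf]
    refine mem_ballStab.mpr ⟨?_, ?_⟩
    · simp only [Subgroup.coe_mul, Subgroup.coe_inv]
      exact H.mul_mem (H.inv_mem (mem_ballStab.mp a.2).1) (mem_ballStab.mp b.2).1
    · intro y hy
      have hab : (a : G ≃g G) y = (b : G ≃g G) y := by
        have := congrFun hfab ⟨y, hy⟩
        exact congrArg Subtype.val this
      simp only [Subgroup.coe_mul, Subgroup.coe_inv, RelIso.mul_apply]
      rw [← hab]
      exact ((a : G ≃g G)).inv_apply_self y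
  haveI hFI : Nx.FiniteIndex := Nx.finiteIndex_of_finite_quotient
  -- Nx is open
  have hNxOpen : IsOpen (Nx : Set ↥A) := by
    have heq : (Nx : Set ↥A) = Subtype.val ⁻¹'
        {g : G ≃g G | ∀ y ∈ {y : V | G.dist x y ≤ r + 1}, g y = y} := by
      ext a
      simp only [SetLike.mem_coe, Set.mem_preimage, Set.mem_setOf_eq]
      rw [Subgroup.mem_subgroupOf]
      constructor
      · intro ha y hy
        exact (mem_ballStab.mp ha).2 y hy
      · intro ha
        exact mem_ballStab.mpr ⟨(mem_ballStab.mp a.2).1, fun y hy => ha y hy⟩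
    rw [heq]
    exact (isOpen_fixing hBall).preimage continuous_subtype_val
  have hNxpi := hpro x Nx hNxOpen hNorm hFI
  -- the key characterization of the selection map modulo Nx
  have key : ∀ (g : ↥(MGrp G Hk v r L)) (h' : ↥A),
      (∀ y : V, G.dist x y ≤ r + 1 → ((g : ↥K) : G ≃g G) y = (h' : G ≃g G) y) →
      (QuotientGroup.mk (sel g) : ↥A ⧸ Nx) = QuotientGroup.mk h' := by
    intro g h' hagree
    refine (QuotientGroup.eq).mpr ?_
    rw [Subgroup.mem_subgroupOf]
    refine mem_ballStab.mpr ⟨?_, ?_⟩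
    · simp only [Subgroup.coe_mul, Subgroup.coe_inv]
      exact H.mul_mem (H.inv_mem (hselH g)) (mem_ballStab.mp h'.2).1
    · intro y hy
      have h1 : ((sel g : ↥A) : G ≃g G) y = ((g : ↥K) : G ≃g G) y :=
        (hsel g y (by omega)).symm
      have h2 : (h' : G ≃g G) y = ((g : ↥K) : G ≃g G) y := (hagree y hy).symm
      simp only [Subgroup.coe_mul, Subgroup.coe_inv, RelIso.mul_apply]
      rw [h2, ← h1]
      exact ((sel g : ↥A) : G ≃g G).inv_apply_self y
  -- the homomorphism
  have hmul : ∀ g₁ g₂ : ↥(MGrp G Hk v r L),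
      (QuotientGroup.mk (sel (g₁ * g₂)) : ↥A ⧸ Nx) =
        QuotientGroup.mk (sel g₁) * QuotientGroup.mk (sel g₂) := by
    intro g₁ g₂
    rw [← QuotientGroup.mk_mul]
    apply key
    intro y hy
    have hg2y : ((g₂ : ↥K) : G ≃g G) y = ((sel g₂ : ↥A) : G ≃g G) y := hsel g₂ y (by omega)
    have hd : G.dist x (((g₂ : ↥K) : G ≃g G) y) ≤ r + 1 := by
      have := aut_dist hconn ((g₂ : ↥K) : G ≃g G) x y
      rw [hgx g₂] at this
      omega
    have lhs : ((g₁ * g₂ : ↥(MGrp G Hk v r L)) : ↥K) = (g₁ : ↥K) * (g₂ : ↥K) := rfl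
    rw [lhs]
    simp only [Subgroup.coe_mul, RelIso.mul_apply]
    rw [← hg2y, hsel g₁ _ (by omega)]
  let φ : ↥(MGrp G Hk v r L) →* (↥A ⧸ Nx) :=
    MonoidHom.mk' (fun g => QuotientGroup.mk (sel g)) hmul
  have hker : φ.ker = (MGrp G Hk v r (L ++ [x])).subgroupOf (MGrp G Hk v r L) := by
    ext g
    rw [MonoidHom.mem_ker, Subgroup.mem_subgroupOf]
    have hφ : φ g = QuotientGroup.mk (sel g) := rfl
    rw [hφ, QuotientGroup.eq_one_iff, Subgroup.mem_subgroupOf]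
    constructor
    · intro hsg
      have : (g : ↥K) ∈ (fixSub G (ballsSet G r (L ++ [x]))).subgroupOf K := by
        rw [Subgroup.mem_subgroupOf]
        intro y hy
        rcases hy with ⟨x', hx', hdx'⟩
        rcases List.mem_append.mp hx' with h | h
        · exact hfixL g y ⟨x', h, hdx'⟩
        · have hxx : x' = x := by simpa using h
          subst hxx
          rw [hsel g y (by omega)]
          exact (mem_ballStab.mp hsg).2 y hdx'
      exact this
    · intro hg
      have hg' : ((g : ↥K) : G ≃g G) ∈ fixSub G (ballsSet G r (L ++ [x])) :=
        Subgroup.mem_subgroupOf.mp hg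
      refine mem_ballStab.mpr ⟨hselH g, fun y hy => ?_⟩
      rw [← hsel g y (by omega)]
      exact hg' y ⟨x, List.mem_append.mpr (Or.inr (by simp)), hy⟩
  rw [← hker]
  have h1 := Subgroup.index_ker φ
  have h2 : Nat.card φ.range ∣ Nx.index := by
    rw [Subgroup.index_eq_card]
    exact Subgroup.card_subgroup_dvd_card φ.range
  have h3 : Nx.index ≠ 0 := hFI.index_ne_zero
  constructor
  · rw [h1]
    intro h0
    rw [h0] at h2
    exact h3 (Nat.eq_zero_of_zero_dvd h2)
  · intro p hp hdvd
    rw [h1] at hdvd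
    exact hNxpi p hp (hdvd.trans h2)

lemma chain_lemma (hconn : G.Connected) (hlf : ∀ w : V, (G.neighborSet w).Finite)
    (H Hk : Subgroup (G ≃g G)) (k : ℕ)
    (hHkeq : (Hk : Set (G ≃g G)) = kClosure G H k)
    (π : Set ℕ) (r : ℕ) (hpro : ∀ x : V, IsProPi π ↥(ballStab G H x r))
    (hk : r + 1 ≤ k) (v : V) (Lb : List V) (m : ℕ)
    (hLb : ∀ z : V, G.dist v z < m → z ∈ Lb)
    (hbase : (MGrp G Hk v r Lb).index ≠ 0 ∧
      ∀ p : ℕ, p.Prime → p ∣ (MGrp G Hk v r Lb).index → p ∈ π) :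
    ∀ L' : List V, (∀ x ∈ L', G.dist v x ≤ m) →
      (MGrp G Hk v r (Lb ++ L')).index ≠ 0 ∧
        ∀ p : ℕ, p.Prime → p ∣ (MGrp G Hk v r (Lb ++ L')).index → p ∈ π := by
  intro L'
  induction L' using List.reverseRecOn with
  | nil => intro _; simpa using hbase
  | append_singleton L' x ih =>
    intro hmem
    have hL' : ∀ y ∈ L', G.dist v y ≤ m := fun y hy =>
      hmem y (List.mem_append.mpr (Or.inl hy))
    have hx : G.dist v x ≤ m := hmem x (List.mem_append.mpr (Or.inr (by simp)))
    obtain ⟨ih1, ih2⟩ := ih hL'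
    have hfix : ∀ g : G ≃g G, g ∈ ballStab G Hk v r →
        g ∈ fixSub G (ballsSet G r (Lb ++ L')) →
        ∀ y : V, G.dist x y ≤ r → g y = y := by
      intro g hgK hgfix y hy
      rcases mem_ballStab.mp hgK with ⟨-, hgr⟩
      rcases Nat.eq_zero_or_pos (G.dist v x) with hd0 | hdpos
      · have hvx : v = x := (hconn.dist_eq_zero_iff).mp hd0
        subst hvx
        exact hgr y hy
      · refine fix_prop hconn g v r (G.dist v x - 1) hgr ?_ y ?_
        · intro z hz y' hy'
          exact hgfix y' ⟨z, List.mem_append.mpr (Or.inl (hLb z (by omega))), hy'⟩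
        · have htr := hconn.dist_triangle (u := v) (v := x) (w := y)
          omega
    have hstep := step_lemma hconn hlf H Hk k hHkeq π r hpro hk v (Lb ++ L') x hfix
    have hle : MGrp G Hk v r ((Lb ++ L') ++ [x]) ≤ MGrp G Hk v r (Lb ++ L') := by
      intro g hg
      have hg' := Subgroup.mem_subgroupOf.mp hg
      refine Subgroup.mem_subgroupOf.mpr fun y hy => hg' y ?_
      rcases hy with ⟨x', hx', hd⟩
      exact ⟨x', List.mem_append.mpr (Or.inl hx'), hd⟩
    have hrel := Subgroup.relIndex_mul_index hle
    have hreldef : (MGrp G Hk v r ((Lb ++ L') ++ [x])).relIndex (MGrp G Hk v r (Lb ++ L'))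
        = ((MGrp G Hk v r ((Lb ++ L') ++ [x])).subgroupOf (MGrp G Hk v r (Lb ++ L'))).index :=
      rfl
    have lassoc : Lb ++ (L' ++ [x]) = (Lb ++ L') ++ [x] := (List.append_assoc _ _ _).symm
    rw [lassoc]
    rw [hreldef] at hrel
    constructor
    · rw [← hrel]
      exact Nat.mul_ne_zero hstep.1 ih1
    · intro p hp hdvd
      rw [← hrel] at hdvd
      rcases (Nat.Prime.dvd_mul hp).mp hdvd with h | h
      · exact hstep.2 p hp h
      · exact ih2 p hp h

lemma ball_chain (hconn : G.Connected) (hlf : ∀ w : V, (G.neighborSet w).Finite)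
    (H Hk : Subgroup (G ≃g G)) (k : ℕ)
    (hHkeq : (Hk : Set (G ≃g G)) = kClosure G H k)
    (π : Set ℕ) (r : ℕ) (hpro : ∀ x : V, IsProPi π ↥(ballStab G H x r))
    (hk : r + 1 ≤ k) (v : V) :
    ∀ s : ℕ, ∃ L : List V, (∀ z : V, G.dist v z ≤ s → z ∈ L) ∧
      (MGrp G Hk v r L).index ≠ 0 ∧
      ∀ p : ℕ, p.Prime → p ∣ (MGrp G Hk v r L).index → p ∈ π := by
  have hballmem : ∀ (s : ℕ) (z : V), G.dist v z ≤ s ↔ z ∈ (ball_finite hconn hlf v s).toFinset.toList := by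
    intro s z
    rw [Finset.mem_toList, Set.Finite.mem_toFinset]
    exact Iff.rfl
  intro s
  induction s with
  | zero =>
    have htop : MGrp G Hk v r ([] : List V) = ⊤ := by
      rw [Subgroup.eq_top_iff']
      intro g
      refine Subgroup.mem_subgroupOf.mpr fun y hy => ?_
      rcases hy with ⟨x', hx', -⟩
      simp at hx'
    have hbase : (MGrp G Hk v r ([] : List V)).index ≠ 0 ∧
        ∀ p : ℕ, p.Prime → p ∣ (MGrp G Hk v r ([] : List V)).index → p ∈ π := by
      rw [htop, Subgroup.index_top]
      exact ⟨one_ne_zero, fun p hp hdvd => absurd (Nat.dvd_one.mp hdvd) hp.ne_one⟩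
    refine ⟨[] ++ (ball_finite hconn hlf v 0).toFinset.toList, ?_, ?_⟩
    · intro z hz
      exact List.mem_append.mpr (Or.inr ((hballmem 0 z).mp hz))
    · exact chain_lemma hconn hlf H Hk k hHkeq π r hpro hk v [] 0
        (fun z hz => absurd hz (Nat.not_lt_zero _)) hbase
        ((ball_finite hconn hlf v 0).toFinset.toList)
        (fun x hx => (hballmem 0 x).mpr hx)
  | succ s ih =>
    obtain ⟨L, hLc, hLpi⟩ := ih
    refine ⟨L ++ (ball_finite hconn hlf v (s + 1)).toFinset.toList, ?_, ?_⟩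
    · intro z hz
      exact List.mem_append.mpr (Or.inr ((hballmem (s + 1) z).mp hz))
    · exact chain_lemma hconn hlf H Hk k hHkeq π r hpro hk v L (s + 1)
        (fun z hz => hLc z (by omega)) hLpi
        ((ball_finite hconn hlf v (s + 1)).toFinset.toList)
        (fun x hx => (hballmem (s + 1) x).mpr hx)

end Machinery

/-- Let `Λ` be a locally finite connected graph and `H ≤ Aut(Λ)` a closed
subgroup.  Let `π` be a set of primes and `r ≥ 0`.  Suppose the pointwise stabilizer in
`H` of the ball `B(v,r)` is a pro-`π` group for every vertex `v`.  Then for every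
`k ≥ r + 1` and every vertex `v`, the pointwise stabilizer in the `k`-closure of `H` of
the ball `B(v,r)` is a pro-`π` group. -/
theorem stmt_12 {V : Type*} (G : SimpleGraph V)
    (hlf : ∀ v : V, (G.neighborSet v).Finite) (hconn : G.Connected)
    (H : Subgroup (G ≃g G)) (hHclosed : IsClosed (H : Set (G ≃g G)))
    (π : Set ℕ) (hπ : ∀ p ∈ π, p.Prime) (r : ℕ)
    (hpro : ∀ v : V, IsProPi π ↥(ballStab G H v r)) :
    ∀ k : ℕ, r + 1 ≤ k →
      ∀ Hk : Subgroup (G ≃g G), (Hk : Set (G ≃g G)) = kClosure G H k →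
        ∀ v : V, IsProPi π ↥(ballStab G Hk v r) := by
  intro k hk Hk hHkeq v
  intro N hNopen hNnorm hNfi p hp hpdvd
  obtain ⟨I, hI⟩ := exists_finset_of_open (ballStab G Hk v r) N hNopen
  obtain ⟨L, hLc, hne, hprimes⟩ :=
    ball_chain hconn hlf H Hk k hHkeq π r hpro hk v (I.sup (G.dist v))
  have hle : MGrp G Hk v r L ≤ N := by
    intro g hg
    apply hI
    intro i hiI
    have hdi : G.dist v i ≤ I.sup (G.dist v) := Finset.le_sup hiI
    have hgfix := Subgroup.mem_subgroupOf.mp hg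
    have hgK := mem_ballStab.mp g.2
    exact fix_prop hconn ((g : ↥(ballStab G Hk v r)) : G ≃g G) v r (I.sup (G.dist v)) hgK.2
      (fun z hz y' hy' => hgfix y' ⟨z, hLc z hz, hy'⟩) i (by omega)
  exact hprimes p hp (hpdvd.trans (Subgroup.index_dvd_of_le hle))
end

section
/- Let Λ be a locally finite connected graph and H a discrete subgroup of Aut(Λ) acting cocompactly on Λ. Then H equals its own k-closure for all sufficiently large k. -/
open SimpleGraph

/-- Graph automorphisms preserve distances (connected case). -/
lemma aux_dist_map_le {V : Type*} {G : SimpleGraph V} (hconn : G.Connected)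
    (g : G ≃g G) (u v : V) : G.dist (g u) (g v) ≤ G.dist u v := by
  obtain ⟨p, hp⟩ := hconn.exists_walk_length_eq_dist u v
  calc G.dist (g u) (g v) ≤ (p.map g.toHom).length := G.dist_le _
    _ = p.length := by simp
    _ = G.dist u v := hp

lemma aux_dist_map {V : Type*} {G : SimpleGraph V} (hconn : G.Connected)
    (g : G ≃g G) (u v : V) : G.dist (g u) (g v) = G.dist u v := by
  refine le_antisymm (aux_dist_map_le hconn g u v) ?_
  have := aux_dist_map_le hconn g.symm (g u) (g v)
  simpa using this

/-- Let `Λ` be a locally finite connected graph and `H` a discrete subgroup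
of `Aut(Λ)` acting cocompactly on `Λ`.  Then `H` equals its own `k`-closure for all
sufficiently large `k`. -/
theorem stmt_13 {V : Type*} (G : SimpleGraph V)
    (hlf : ∀ v : V, (G.neighborSet v).Finite) (hconn : G.Connected)
    (H : Subgroup (G ≃g G)) (hdisc : DiscreteTopology ↥H) (hcc : CocompactOn G H) :
    ∃ k₀ : ℕ, ∀ k : ℕ, k₀ ≤ k → kClosure G H k = (H : Set (G ≃g G)) := by
  classical
  -- Extract from discreteness a finite set I of vertices such that any element of H
  -- fixing I pointwise is the identity.
  obtain ⟨I, hI⟩ : ∃ I : Finset V, ∀ h : G ≃g G, h ∈ H → (∀ i ∈ I, h i = i) → h = 1 := by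
    letI : TopologicalSpace V := ⊥
    have hopen : IsOpen ({(1 : ↥H)} : Set ↥H) := isOpen_discrete _
    rw [isOpen_induced_iff] at hopen
    obtain ⟨T, hT, hT1⟩ := hopen
    rw [isOpen_induced_iff] at hT
    obtain ⟨U, hU, hUT⟩ := hT
    have h1T : ((1 : G ≃g G) : V → V) ∈ U := by
      have : ((1 : ↥H) : G ≃g G) ∈ T := by
        have : (1 : ↥H) ∈ (Subtype.val ⁻¹' T : Set ↥H) := by rw [hT1]; rfl
        exact this
      rw [← hUT] at this
      exact this
    rw [isOpen_pi_iff] at hU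
    obtain ⟨I, u, hu, hsub⟩ := hU ((1 : G ≃g G) : V → V) h1T
    refine ⟨I, fun h hH hfix => ?_⟩
    have hmem : (h : V → V) ∈ (I : Set V).pi u := by
      intro a ha
      rw [hfix a ha]
      exact (hu a ha).2
    have hhT : h ∈ T := by rw [← hUT]; exact hsub hmem
    have : (⟨h, hH⟩ : ↥H) ∈ (Subtype.val ⁻¹' T : Set ↥H) := hhT
    rw [hT1] at this
    exact congrArg Subtype.val this
  rcases isEmpty_or_nonempty V with hV | hV
  · -- empty vertex set: every automorphism is the identity
    refine ⟨0, fun k _ => ?_⟩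
    ext g
    have hg1 : g = 1 := RelIso.ext fun x => (IsEmpty.false x).elim
    constructor
    · intro _; rw [hg1]; exact H.one_mem
    · intro hgH
      intro v
      exact (IsEmpty.false v).elim
  · obtain ⟨s, hs⟩ := hcc
    obtain ⟨v₀⟩ := hV
    -- Key: for r ≥ N, any element of H fixing a ball of radius r pointwise is 1.
    have key : ∀ r : ℕ, s.sup (G.dist v₀) + I.sup (G.dist v₀) ≤ r → ∀ v : V, ∀ h : G ≃g G, h ∈ H →
        (∀ x : V, G.dist v x ≤ r → h x = x) → h = 1 := by
      intro r hr v h hH hfix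
      obtain ⟨a, haH, has⟩ := hs v
      have hconj : a * h * a⁻¹ = 1 := by
        apply hI _ (H.mul_mem (H.mul_mem haH hH) (H.inv_mem haH))
        intro i hi
        have hdist : G.dist v (a⁻¹ i) ≤ r := by
          have e1 : G.dist (a v) (a (a⁻¹ i)) = G.dist v (a⁻¹ i) :=
            aux_dist_map hconn a v (a⁻¹ i)
          have e2 : a (a⁻¹ i) = i := a.apply_inv_self i
          rw [e2] at e1
          rw [← e1]
          calc G.dist (a v) i ≤ G.dist (a v) v₀ + G.dist v₀ i := hconn.dist_triangle
            _ ≤ s.sup (G.dist v₀) + I.sup (G.dist v₀) := by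
                refine add_le_add ?_ (Finset.le_sup hi)
                rw [SimpleGraph.dist_comm]
                exact Finset.le_sup has
            _ ≤ r := hr
        have := hfix (a⁻¹ i) hdist
        rw [RelIso.mul_apply, RelIso.mul_apply, this]
        exact a.apply_inv_self i
      calc h = a⁻¹ * (a * h * a⁻¹) * a := by group
        _ = 1 := by rw [hconj]; group
    refine ⟨s.sup (G.dist v₀) + I.sup (G.dist v₀) + 1, fun k hk => ?_⟩
    ext g
    constructor
    · intro hg
      choose h hH hagree using hg
      have hadj : ∀ v w : V, G.Adj v w → h v = h w := by
        intro v w hvw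
        have hfix : ∀ x : V, G.dist v x ≤ k - 1 → ((h w)⁻¹ * h v) x = x := by
          intro x hx
          have hwv : G.dist w v ≤ 1 := by
            have := G.dist_le hvw.symm.toWalk
            simpa using this
          have h1 : G.dist w x ≤ k := by
            calc G.dist w x ≤ G.dist w v + G.dist v x := hconn.dist_triangle
              _ ≤ 1 + (k - 1) := add_le_add hwv hx
              _ ≤ k := by omega
          have e1 := hagree v x (le_trans hx (by omega))
          have e2 := hagree w x h1
          rw [RelIso.mul_apply, ← e1, e2]
          exact (h w).inv_apply_self x
        have h1 : ((h w)⁻¹ * h v) = 1 :=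
          key (k - 1) (by omega) v _ (H.mul_mem (H.inv_mem (hH w)) (hH v)) hfix
        exact (inv_mul_eq_one.mp h1).symm
      have hconst : ∀ v w : V, h v = h w := by
        intro v w
        obtain ⟨p⟩ := hconn v w
        induction p with
        | nil => rfl
        | cons a p ih => exact (hadj _ _ a).trans ih
      have hg_eq : g = h v₀ := by
        apply RelIso.ext
        intro x
        have := hagree x x (by rw [SimpleGraph.dist_self]; omega)
        rw [this, hconst x v₀]
      rw [hg_eq]
      exact hH v₀
    · intro hgH v
      exact ⟨g, hgH, fun _ _ => rfl⟩
end

section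
/- Let T be an infinite tree in which every vertex has degree at least 2, and let H ≤ Aut(T) act cocompactly on T and fix an end b of T. Then the Busemann homomorphism φ : H → ℤ defined by φ(h) = lim_{n→∞} (d(h(v_n), v_n)) along a ray (v_n) toward b (with appropriate signs) is a group homomorphism with infinite image; in particular, H has an infinite cyclic discrete quotient. -/
open SimpleGraph

section StmtAux

variable {V : Type*} {G : SimpleGraph V}

private lemma path_len (hconn : G.Connected) (hac : G.IsAcyclic) {u v : V}
    {p : G.Walk u v} (hp : p.IsPath) : p.length = G.dist u v := by
  obtain ⟨q, hq, hql⟩ := hconn.exists_path_of_dist u v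
  have h2 : (⟨p, hp⟩ : G.Path u v) = ⟨q, hq⟩ := hac.path_unique _ _
  have h3 : p = q := congrArg Subtype.val h2
  rw [h3, hql]

private lemma iso_dist_le (hconn : G.Connected) (e : G ≃g G) (u v : V) :
    G.dist (e u) (e v) ≤ G.dist u v := by
  obtain ⟨w, hw⟩ := hconn.exists_walk_length_eq_dist u v
  calc G.dist (e u) (e v) ≤ (w.map e.toHom).length := dist_le _
    _ = w.length := Walk.length_map _ _
    _ = G.dist u v := hw

private lemma iso_dist (hconn : G.Connected) (e : G ≃g G) (u v : V) :
    G.dist (e u) (e v) = G.dist u v := by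
  refine le_antisymm (iso_dist_le hconn e u v) ?_
  have h := iso_dist_le hconn e.symm (e u) (e v)
  simpa using h

private lemma ray_walk (b : ℕ → V) (hray : ∀ n, G.Adj (b n) (b (n+1))) (i : ℕ) :
    ∀ d : ℕ, ∃ w : G.Walk (b i) (b (i + d)),
      w.length = d ∧ w.support = (List.range (d+1)).map (fun t => b (i+t)) := by
  intro d
  induction d with
  | zero => exact ⟨Walk.nil, rfl, by simp [List.range_succ]⟩
  | succ d ih =>
    obtain ⟨w, hl, hs⟩ := ih
    refine ⟨w.concat (hray (i+d)), ?_, ?_⟩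
    · rw [Walk.length_concat, hl]
    · rw [Walk.support_concat, hs]
      simp [List.range_succ, Nat.add_assoc]

private lemma ray_dist (hconn : G.Connected) (hac : G.IsAcyclic) {b : ℕ → V}
    (hray : ∀ n, G.Adj (b n) (b (n+1))) (hinj : Function.Injective b)
    {i j : ℕ} (hij : i ≤ j) : G.dist (b i) (b j) = j - i := by
  obtain ⟨w, hl, hs⟩ := ray_walk b hray i (j - i)
  have hp : w.IsPath := by
    rw [Walk.isPath_def, hs]
    refine List.Nodup.map ?_ List.nodup_range
    intro a b' hab
    exact Nat.add_left_cancel (hinj hab)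
  have h2 := path_len hconn hac hp
  rw [hl] at h2
  have hj : i + (j - i) = j := by omega
  rw [hj] at h2
  exact h2.symm

private lemma exists_closer (hconn : G.Connected) {u x : V} {t : ℕ}
    (hx : G.dist u x = t + 1) : ∃ u₁, G.Adj u u₁ ∧ G.dist u₁ x = t := by
  obtain ⟨p, hp, hpl⟩ := hconn.exists_path_of_dist u x
  rw [hx] at hpl
  cases p with
  | nil => simp at hpl
  | cons a p' =>
    rename_i u₁
    refine ⟨u₁, a, ?_⟩
    have h1 : p'.length = t := by simpa using hpl
    have h2 : G.dist u₁ x ≤ t := by rw [← h1]; exact dist_le p'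
    have h3 : G.dist u x ≤ G.dist u u₁ + G.dist u₁ x := hconn.dist_triangle
    have h4 : G.dist u u₁ = 1 := dist_eq_one_iff_adj.mpr a
    rw [hx, h4] at h3
    clear hpl h1 h4 hp hx
    omega

private lemma neighbor_eq (hconn : G.Connected) (hac : G.IsAcyclic) {u v u₁ u₂ : V}
    (a : G.Adj u u₁) (a' : G.Adj u u₂)
    (h1 : G.dist u v = G.dist u₁ v + 1) (h2 : G.dist u v = G.dist u₂ v + 1) :
    u₁ = u₂ := by
  obtain ⟨r, hr, hrl⟩ := hconn.exists_path_of_dist u₁ v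
  obtain ⟨r', hr', hrl'⟩ := hconn.exists_path_of_dist u₂ v
  have hw1 : (Walk.cons a r).IsPath :=
    Walk.isPath_of_length_eq_dist _ (by rw [Walk.length_cons, hrl, ← h1])
  have hw2 : (Walk.cons a' r').IsPath :=
    Walk.isPath_of_length_eq_dist _ (by rw [Walk.length_cons, hrl', ← h2])
  have heq : (⟨Walk.cons a r, hw1⟩ : G.Path u v) = ⟨Walk.cons a' r', hw2⟩ :=
    hac.path_unique _ _
  have heq' : Walk.cons a r = Walk.cons a' r' := congrArg Subtype.val heq
  have h3 := congrArg (fun w : G.Walk u v => w.getVert 1) heq'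
  simpa [Walk.getVert_cons_succ] using h3

private lemma between_unique (hconn : G.Connected) (hac : G.IsAcyclic) :
    ∀ (t : ℕ) (u v x y : V), G.dist u x = t →
      G.dist u x + G.dist x v = G.dist u v →
      G.dist u y + G.dist y v = G.dist u v →
      G.dist u y = t → x = y := by
  intro t
  induction t with
  | zero =>
    intro u v x y hx _ _ hy
    have hx' : u = x := hconn.dist_eq_zero_iff.mp hx
    have hy' : u = y := hconn.dist_eq_zero_iff.mp hy
    rw [← hx', hy']
  | succ t ih =>
    intro u v x y hx hxs hys hy
    obtain ⟨u₁, a, hu1⟩ := exists_closer hconn hx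
    obtain ⟨u₂, a', hu2⟩ := exists_closer hconn hy
    have e1 : G.dist u₁ v ≤ t + G.dist x v :=
      le_trans hconn.dist_triangle (by rw [hu1])
    have e2 : G.dist u v ≤ G.dist u u₁ + G.dist u₁ v := hconn.dist_triangle
    have e3 : G.dist u u₁ = 1 := dist_eq_one_iff_adj.mpr a
    have h1v : G.dist u₁ v = t + G.dist x v := by
      rw [e3] at e2; rw [hx] at hxs; clear e3 hx hys hy a a'; omega
    have f1 : G.dist u₂ v ≤ t + G.dist y v :=
      le_trans hconn.dist_triangle (by rw [hu2])
    have f2 : G.dist u v ≤ G.dist u u₂ + G.dist u₂ v := hconn.dist_triangle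
    have f3 : G.dist u u₂ = 1 := dist_eq_one_iff_adj.mpr a'
    have h2v : G.dist u₂ v = t + G.dist y v := by
      rw [f3] at f2; rw [hy] at hys; clear f3 hx hxs hy a a' e1 e2 e3 h1v; omega
    have hb1 : G.dist u v = G.dist u₁ v + 1 := by
      rw [hx] at hxs; rw [h1v]; clear hx hy hys e1 e2 e3 f1 f2 f3 h2v a a'; omega
    have hb2 : G.dist u v = G.dist u₂ v + 1 := by
      rw [hy] at hys; rw [h2v]; clear hx hy hxs e1 e2 e3 f1 f2 f3 h1v hb1 a a'; omega
    have h12 : u₁ = u₂ := neighbor_eq hconn hac a a' hb1 hb2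
    subst h12
    refine ih u₁ v x y hu1 ?_ ?_ hu2
    · rw [hu1, h1v]
    · rw [hu2, h2v]



private lemma pair_exists (b : ℕ → V) (e : G ≃g G)
    (hfe : Set.Infinite (Set.range (fun n => e (b n)) ∩ Set.range b)) (N : ℕ) :
    ∃ m k : ℕ, N ≤ m ∧ N ≤ k ∧ e (b m) = b k := by
  have hfin : (((fun n => e (b n)) '' (Set.Iio N)) ∪ (b '' (Set.Iio N))).Finite :=
    ((Set.finite_Iio N).image _).union ((Set.finite_Iio N).image _)
  obtain ⟨x, hx⟩ := (hfe.diff hfin).nonempty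
  obtain ⟨⟨⟨m, hm⟩, ⟨k, hk⟩⟩, hnot⟩ := hx
  refine ⟨m, k, ?_, ?_, hm.trans hk.symm⟩
  · by_contra hc
    exact hnot (Set.mem_union_left _ ⟨m, Set.mem_Iio.mpr (by omega), hm⟩)
  · by_contra hc
    exact hnot (Set.mem_union_right _ ⟨k, Set.mem_Iio.mpr (by omega), hk⟩)

private lemma shift_exists (hconn : G.Connected) (hac : G.IsAcyclic) {b : ℕ → V}
    (hray : ∀ n, G.Adj (b n) (b (n+1))) (hinj : Function.Injective b) (e : G ≃g G)
    (hfe : Set.Infinite (Set.range (fun n => e (b n)) ∩ Set.range b)) :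
    ∃ (M : ℕ) (c : ℤ), ∀ m : ℕ, M ≤ m →
      0 ≤ (m : ℤ) + c ∧ e (b m) = b (((m : ℤ) + c).toNat) := by
  obtain ⟨m₀, k₀, -, -, h₀⟩ := pair_exists b e hfe 0
  refine ⟨m₀, (k₀ : ℤ) - (m₀ : ℤ), ?_⟩
  intro m hm
  obtain ⟨m', k', hm', hk', h'⟩ := pair_exists b e hfe (max (m+1) (m₀+k₀+1))
  have hm'm : m + 1 ≤ m' := le_trans (le_max_left _ _) hm'
  have hk'k : m₀ + k₀ + 1 ≤ k' := le_trans (le_max_right _ _) hk'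
  clear hm' hk'
  have d1 : G.dist (b m₀) (b m') = m' - m₀ := ray_dist hconn hac hray hinj (by omega)
  have d2 : G.dist (b k₀) (b k') = k' - k₀ := ray_dist hconn hac hray hinj (by omega)
  have hE : G.dist (b k₀) (b k') = G.dist (b m₀) (b m') := by
    rw [← h₀, ← h', iso_dist hconn e]
  have harith : k' - k₀ = m' - m₀ := by rw [← d1, ← d2, hE]
  clear d1 d2 hE
  have key : e (b m) = b (k₀ + (m - m₀)) := by
    apply between_unique hconn hac (m - m₀) (b k₀) (b k')
    · rw [← h₀, iso_dist hconn e, ray_dist hconn hac hray hinj hm]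
    · rw [← h₀, ← h', iso_dist hconn e, iso_dist hconn e, iso_dist hconn e,
        ray_dist hconn hac hray hinj hm, ray_dist hconn hac hray hinj (show m ≤ m' by omega),
        ray_dist hconn hac hray hinj (show m₀ ≤ m' by omega)]
      clear h₀ h'
      omega
    · rw [ray_dist hconn hac hray hinj (show k₀ ≤ k₀ + (m - m₀) by omega),
        ray_dist hconn hac hray hinj (show k₀ + (m - m₀) ≤ k' by omega),
        ray_dist hconn hac hray hinj (show k₀ ≤ k' by omega)]
      clear h₀ h'
      omega
    · rw [ray_dist hconn hac hray hinj (show k₀ ≤ k₀ + (m - m₀) by omega)]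
      omega
  constructor
  · clear key h₀ h'
    omega
  · have hT : ((m : ℤ) + ((k₀ : ℤ) - (m₀ : ℤ))).toNat = k₀ + (m - m₀) := by
      clear key h₀ h'
      omega
    rw [key, hT]



end StmtAux

/-- Let `T` be an infinite locally finite tree in which every vertex has
degree at least `2`, and let `H ≤ Aut(T)` act cocompactly on `T` and fix an end `b` of
`T` (given by a geodesic ray; fixing the end means the image of the ray under any `h ∈ H`
shares infinitely many vertices with the ray).  Then the Busemann homomorphism
`φ : H → ℤ`, `φ(h) = lim_n (d(v_n, v_0) − d(h⁻¹ v_n, v_0))` along the ray `(v_n)`, is a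
group homomorphism with infinite image; in particular `H` has an infinite cyclic discrete
quotient. -/
theorem stmt_14 {V : Type*} [Infinite V] (G : SimpleGraph V)
    (hlf : ∀ v : V, (G.neighborSet v).Finite) (hconn : G.Connected) (hac : G.IsAcyclic)
    (hdeg : ∀ v : V, 2 ≤ (G.neighborSet v).ncard)
    (H : Subgroup (G ≃g G)) (hcc : CocompactOn G H)
    (b : ℕ → V) (hray : ∀ n : ℕ, G.Adj (b n) (b (n + 1))) (hinj : Function.Injective b)
    (hfix : ∀ h ∈ H, Set.Infinite (Set.range (fun n => h (b n)) ∩ Set.range b)) :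
    ∃ φ : ↥H → ℤ,
      (∀ h : ↥H, ∀ᶠ n in Filter.atTop,
        ((G.dist (b n) (b 0) : ℤ) - (G.dist (((h : G ≃g G)⁻¹) (b n)) (b 0) : ℤ)) = φ h) ∧
      (∀ g h : ↥H, φ (g * h) = φ g + φ h) ∧
      Set.Infinite (Set.range φ) := by
  classical
  have hshift : ∀ h : ↥H, ∃ (M : ℕ) (c : ℤ), ∀ m : ℕ, M ≤ m →
      0 ≤ (m : ℤ) + c ∧ (h : G ≃g G) (b m) = b (((m : ℤ) + c).toNat) :=
    fun h => shift_exists hconn hac hray hinj _ (hfix _ h.2)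
  choose M c hMc using hshift
  have hrd : ∀ n : ℕ, G.dist (b n) (b 0) = n := by
    intro n
    rw [dist_comm]
    have h1 := ray_dist hconn hac hray hinj (Nat.zero_le n)
    simpa using h1
  have hom : ∀ g h : ↥H, c (g * h) = c g + c h := by
    intro g h
    set m : ℕ := M (g*h) + M h + M g + (- c h).toNat with hmdef
    have h1 := hMc h m (by omega)
    have h2 := hMc (g*h) m (by omega)
    have h3 := hMc g (((m : ℤ) + c h).toNat) (by omega)
    have e1 : ((g*h : ↥H) : G ≃g G) (b m) = (g : G ≃g G) ((h : G ≃g G) (b m)) := rfl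
    rw [h1.2, h3.2, h2.2] at e1
    have e2 := hinj e1
    have n1 := h1.1; have n2 := h2.1; have n3 := h3.1
    clear h1 h2 h3 e1 hmdef
    omega
  have hc1 : c 1 = 0 := by
    have h1 := hom 1 1
    rw [mul_one] at h1
    omega
  have hinv : ∀ h : ↥H, c h + c h⁻¹ = 0 := by
    intro h
    have h0 := hom h h⁻¹
    rw [mul_inv_cancel] at h0
    omega
  have hev : ∀ h : ↥H, ∀ᶠ n in Filter.atTop,
      ((G.dist (b n) (b 0) : ℤ) - (G.dist (((h : G ≃g G)⁻¹) (b n)) (b 0) : ℤ)) = c h := by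
    intro h
    rw [Filter.eventually_atTop]
    refine ⟨M h⁻¹, fun n hn => ?_⟩
    have h1 := hMc h⁻¹ n hn
    have hco : ((h⁻¹ : ↥H) : G ≃g G) = ((h : G ≃g G))⁻¹ := rfl
    rw [← hco, h1.2, hrd, hrd]
    have h2 := hinv h
    have n1 := h1.1
    clear h1 hco
    omega
  have hne : ∃ h : ↥H, c h ≠ 0 := by
    by_contra hno
    push_neg at hno
    have hfar : ∀ (h : ↥H) (n : ℕ), (n : ℕ) ≤ G.dist (b 0) ((h : G ≃g G) (b n)) := by
      intro h n
      set Mx := max (M h) n with hMx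
      have h1 := hMc h Mx (le_max_left _ _)
      rw [hno h] at h1
      have h2 : (h : G ≃g G) (b Mx) = b Mx := by
        rw [h1.2]
        congr 1
      have h3 : G.dist ((h : G ≃g G) (b n)) (b Mx) = Mx - n := by
        conv_lhs => rw [← h2]
        rw [iso_dist hconn]
        exact ray_dist hconn hac hray hinj (le_max_right _ _)
      have h4 : G.dist (b 0) (b Mx) = Mx := by
        have h5 := ray_dist hconn hac hray hinj (Nat.zero_le Mx)
        simpa using h5
      have h5 : G.dist (b 0) (b Mx) ≤
          G.dist (b 0) ((h : G ≃g G) (b n)) + G.dist ((h : G ≃g G) (b n)) (b Mx) :=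
        hconn.dist_triangle
      rw [h3, h4] at h5
      clear h1 h2 h3 h4 hMx
      omega
    obtain ⟨s, hs⟩ := (hcc : ∃ s : Finset V, ∀ v : V, ∃ h ∈ H, h v ∈ s)
    set R := s.sup (fun x => G.dist (b 0) x) with hR
    obtain ⟨h, hh, hmem⟩ := hs (b (R+1))
    have h6 : G.dist (b 0) (h (b (R+1))) ≤ R := Finset.le_sup hmem
    have h7 : (R + 1 : ℕ) ≤ G.dist (b 0) (h (b (R+1))) := hfar ⟨h, hh⟩ (R+1)
    clear hR
    omega
  obtain ⟨h₀, hc0⟩ := hne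
  have hpow : ∀ n : ℕ, c (h₀ ^ n) = (n : ℤ) * c h₀ := by
    intro n
    induction n with
    | zero => simp [pow_zero, hc1]
    | succ n ih =>
      rw [pow_succ, hom, ih]
      push_cast
      ring
  refine ⟨c, hev, hom, ?_⟩
  apply Set.infinite_of_injective_forall_mem (f := fun n : ℕ => c (h₀ ^ n))
  · intro a a' haa
    simp only [hpow] at haa
    have h8 : (a : ℤ) = a' := mul_right_cancel₀ hc0 haa
    exact_mod_cast h8
  · intro n
    exact ⟨h₀ ^ n, rfl⟩
end

section
/- Let Λ be a locally finite connected graph, K ≥ 0 an integer, H ≤ Aut(Λ) acting cocompactly, and P an open subgroup of H of finite index m = [H : P]. Suppose there exists R ≥ 0 and a vertex v_0 with the pointwise stabilizer H_{v_0}^{[R]} contained in P, and let D be the diameter of a compact fundamental domain for the P-action. Then for every k ≥ R + D + 1, the index of the k-closure of P in the k-closure of H is at most m. -/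
open SimpleGraph

section AuxLemmas

variable {V : Type*} {G : SimpleGraph V}

lemma aux_iso_dist_le (hconn : G.Connected) (r : G ≃g G) (a b : V) :
    G.dist (r a) (r b) ≤ G.dist a b := by
  obtain ⟨p, hp⟩ := hconn.exists_walk_length_eq_dist a b
  calc G.dist (r a) (r b) ≤ (p.map r.toHom).length := SimpleGraph.dist_le _
    _ = G.dist a b := by rw [SimpleGraph.Walk.length_map, hp]

lemma aux_iso_dist_eq (hconn : G.Connected) (r : G ≃g G) (a b : V) :
    G.dist (r a) (r b) = G.dist a b := by
  refine le_antisymm (aux_iso_dist_le hconn r a b) ?_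
  have h := aux_iso_dist_le hconn r⁻¹ (r a) (r b)
  simpa using h

end AuxLemmas

/-- Let `Λ` be a locally finite connected graph, `K ≥ 0` an integer,
`H ≤ Aut(Λ)` acting cocompactly, and `P` an open subgroup of `H` of finite index
`m = [H : P]`.  Suppose there exist `R ≥ 0` and a vertex `v₀` with the pointwise
stabilizer `H_{v₀}^{[R]}` contained in `P`, and let `D` be the diameter of a compact
fundamental domain for the `P`-action.  Then for every `k ≥ R + D + 1`, the index of the
`k`-closure of `P` in the `k`-closure of `H` is (finite and) at most `m`. -/
theorem stmt_15 {V : Type*} (G : SimpleGraph V)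
    (hlf : ∀ v : V, (G.neighborSet v).Finite) (hconn : G.Connected)
    (K : ℕ) (H P : Subgroup (G ≃g G)) (hcc : CocompactOn G H) (hPH : P ≤ H)
    (hPopen : ∃ O : Set (G ≃g G), IsOpen O ∧ (P : Set (G ≃g G)) = (H : Set (G ≃g G)) ∩ O)
    (hPfi : P.relIndex H ≠ 0)
    (R : ℕ) (v₀ : V) (hRP : ballStab G H v₀ R ≤ P)
    (s : Finset V) (hfd : ∀ v : V, ∃ g ∈ P, g v ∈ s)
    (D : ℕ) (hdiam : ∀ x ∈ s, ∀ y ∈ s, G.dist x y ≤ D) :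
    ∀ k : ℕ, R + D + 1 ≤ k →
      ∀ Pk Hk : Subgroup (G ≃g G),
        (Pk : Set (G ≃g G)) = kClosure G P k → (Hk : Set (G ≃g G)) = kClosure G H k →
        Pk.relIndex Hk ≠ 0 ∧ Pk.relIndex Hk ≤ P.relIndex H := by
  intro k hk Pk Hk hPk hHk
  -- basic facts and inclusions
  have hPPk : ∀ p, p ∈ P → p ∈ Pk := by
    intro p hp
    rw [← SetLike.mem_coe, hPk]
    exact fun v => ⟨p, hp, fun x _ => rfl⟩
  have hHHk : ∀ h, h ∈ H → h ∈ Hk := by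
    intro h hh
    rw [← SetLike.mem_coe, hHk]
    exact fun v => ⟨h, hh, fun x _ => rfl⟩
  -- the translated base vertex
  obtain ⟨p₀, hp₀P, hp₀s⟩ := hfd v₀
  -- pointwise stabilizer of the ball around `p₀ v₀` of radius `R` is in `P`
  have hstab' : ∀ g, g ∈ H → (∀ x, G.dist (p₀ v₀) x ≤ R → g x = x) → g ∈ P := by
    intro g hgH hfix
    have key : p₀⁻¹ * g * p₀ ∈ ballStab G H v₀ R := by
      refine ⟨H.mul_mem (H.mul_mem (H.inv_mem (hPH hp₀P)) hgH) (hPH hp₀P), ?_⟩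
      intro x hx
      have hd : G.dist (p₀ v₀) (p₀ x) ≤ R := by
        rw [aux_iso_dist_eq hconn]; exact hx
      show p₀⁻¹ (g (p₀ x)) = x
      rw [hfix _ hd]
      exact RelIso.inv_apply_self _ _
    have hmem := hRP key
    have h2 : p₀ * (p₀⁻¹ * g * p₀) * p₀⁻¹ ∈ P :=
      P.mul_mem (P.mul_mem hp₀P hmem) (P.inv_mem hp₀P)
    have e : p₀ * (p₀⁻¹ * g * p₀) * p₀⁻¹ = g := by group
    rwa [e] at h2
  -- conjugation moves pointwise fixators of balls
  have conjfix : ∀ (r q : G ≃g G) (w : V) (n : ℕ), (∀ x, G.dist w x ≤ n → q x = x) →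
      ∀ y, G.dist (r w) y ≤ n → (r * q * r⁻¹) y = y := by
    intro r q w n hq y hy
    have hd : G.dist (r w) (r (r⁻¹ y)) = G.dist w (r⁻¹ y) := aux_iso_dist_eq hconn r w (r⁻¹ y)
    rw [RelIso.apply_inv_self] at hd
    have hx : G.dist w (r⁻¹ y) ≤ n := hd ▸ hy
    show r (q (r⁻¹ y)) = y
    rw [hq _ hx]
    exact RelIso.apply_inv_self _ _
  -- main lemma: every element of the k-closure of H lies in h • (k-closure of P)
  have main : ∀ g ∈ Hk, ∃ h ∈ H, h⁻¹ * g ∈ Pk := by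
    intro g hgHk
    rw [← SetLike.mem_coe, hHk] at hgHk
    have hg : ∀ v : V, ∃ h ∈ H, ∀ x : V, G.dist v x ≤ k → g x = h x := hgHk
    obtain ⟨h, hhH, hhag⟩ := hg (p₀ v₀)
    refine ⟨h, hhH, ?_⟩
    have step : ∀ u w : V, G.Adj u w →
        (∃ p ∈ P, ∀ x, G.dist u x ≤ k → g x = (h * p) x) →
        (∃ p ∈ P, ∀ x, G.dist w x ≤ k → g x = (h * p) x) := by
      rintro u w huw ⟨p, hpP, hpag⟩
      obtain ⟨h', hh'H, hh'ag⟩ := hg w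
      have hqfix : ∀ x, G.dist w x ≤ k - 1 → ((h * p)⁻¹ * h') x = x := by
        intro x hx
        have h1 : G.dist u w = 1 := SimpleGraph.dist_eq_one_iff_adj.mpr huw
        have htri := hconn.dist_triangle (u := u) (v := w) (w := x)
        have hux : G.dist u x ≤ k := by omega
        have hwx : G.dist w x ≤ k := by omega
        have e1 : h' x = (h * p) x := (hh'ag x hwx).symm.trans (hpag x hux)
        show (h * p)⁻¹ (h' x) = x
        rw [e1]
        exact RelIso.inv_apply_self _ _
      obtain ⟨r, hrP, hrs⟩ := hfd w
      have hqH : (h * p)⁻¹ * h' ∈ H :=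
        H.mul_mem (H.inv_mem (H.mul_mem hhH (hPH hpP))) hh'H
      have hconj : r * ((h * p)⁻¹ * h') * r⁻¹ ∈ P := by
        apply hstab' _ (H.mul_mem (H.mul_mem (hPH hrP) hqH) (H.inv_mem (hPH hrP)))
        intro y hy
        apply conjfix r _ w (k - 1) hqfix y
        have htri := hconn.dist_triangle (u := r w) (v := p₀ v₀) (w := y)
        have hds : G.dist (r w) (p₀ v₀) ≤ D := hdiam _ hrs _ hp₀s
        omega
      have hqP : (h * p)⁻¹ * h' ∈ P := by
        have h3 : r⁻¹ * (r * ((h * p)⁻¹ * h') * r⁻¹) * r ∈ P :=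
          P.mul_mem (P.mul_mem (P.inv_mem hrP) hconj) hrP
        have e : r⁻¹ * (r * ((h * p)⁻¹ * h') * r⁻¹) * r = (h * p)⁻¹ * h' := by group
        rwa [e] at h3
      refine ⟨p * ((h * p)⁻¹ * h'), P.mul_mem hpP hqP, ?_⟩
      intro x hx
      have e : h * (p * ((h * p)⁻¹ * h')) = h' := by group
      rw [e]
      exact hh'ag x hx
    have walkstep : ∀ (a b : V) (w : G.Walk a b),
        (∃ p ∈ P, ∀ x, G.dist a x ≤ k → g x = (h * p) x) →
        (∃ p ∈ P, ∀ x, G.dist b x ≤ k → g x = (h * p) x) := by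
      intro a b w
      induction w with
      | nil => exact id
      | cons hadj w ih => exact fun hQ => ih (step _ _ hadj hQ)
    rw [← SetLike.mem_coe, hPk]
    intro v
    obtain ⟨p, hpP, hpag⟩ := walkstep _ v ((hconn (p₀ v₀) v).some)
      ⟨1, P.one_mem, fun x hx => by rw [mul_one]; exact hhag x hx⟩
    refine ⟨p, hpP, fun x hx => ?_⟩
    show h⁻¹ (g x) = p x
    rw [hpag x hx]
    exact RelIso.inv_apply_self h (p x)
  -- counting cosets
  have hPsub : P ≤ Pk := fun p hp => hPPk p hp
  let ff : H → Hk := fun a => ⟨a.1, hHHk a.1 a.2⟩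
  have hff : ∀ a b : H, @Setoid.r _ (QuotientGroup.leftRel (P.subgroupOf H)) a b →
      (QuotientGroup.mk (ff a) : Hk ⧸ Pk.subgroupOf Hk) = QuotientGroup.mk (ff b) := by
    intro a b hab
    rw [QuotientGroup.leftRel_apply] at hab
    rw [Subgroup.mem_subgroupOf] at hab
    rw [QuotientGroup.eq, Subgroup.mem_subgroupOf]
    exact hPsub hab
  let f : (H ⧸ P.subgroupOf H) → (Hk ⧸ Pk.subgroupOf Hk) :=
    fun x => Quotient.liftOn' x (fun a => (QuotientGroup.mk (ff a) : Hk ⧸ Pk.subgroupOf Hk)) hff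
  have hfsurj : Function.Surjective f := by
    intro y
    obtain ⟨g, rfl⟩ := QuotientGroup.mk_surjective y
    obtain ⟨h, hhH, hhp⟩ := main g.1 g.2
    refine ⟨QuotientGroup.mk ⟨h, hhH⟩, ?_⟩
    show QuotientGroup.mk (ff ⟨h, hhH⟩) = QuotientGroup.mk g
    rw [QuotientGroup.eq]
    rw [Subgroup.mem_subgroupOf]
    exact hhp
  have hfin : Finite (H ⧸ P.subgroupOf H) := by
    have : Nat.card (H ⧸ P.subgroupOf H) ≠ 0 := hPfi
    exact (Nat.card_ne_zero.mp this).2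
  have hfin' : Finite (Hk ⧸ Pk.subgroupOf Hk) := Finite.of_surjective f hfsurj
  constructor
  · show Nat.card (Hk ⧸ Pk.subgroupOf Hk) ≠ 0
    exact Nat.card_ne_zero.mpr ⟨⟨QuotientGroup.mk 1⟩, hfin'⟩
  · show Nat.card (Hk ⧸ Pk.subgroupOf Hk) ≤ Nat.card (H ⧸ P.subgroupOf H)
    exact Nat.card_le_card_of_surjective f hfsurj
end

section
/- Let Λ be a locally finite connected graph, H_n → H and L_n → L two Chabauty-convergent sequences of closed subgroups of Aut(Λ) with L_n ≤ H_n for each n. Suppose there is C > 0 such that each H_n acts with at most C orbits of vertices, and S ≥ 1 such that [H_n : L_n] ≤ S for each n. Then L ≤ H and [H : L] ≤ S. -/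
open SimpleGraph

/-- The space of closed subgroups of a topological group `G`. -/
def ChabautySpace (G : Type*) [Group G] [TopologicalSpace G] : Type _ :=
  {H : Subgroup G // IsClosed (H : Set G)}

/-- The Chabauty (Fell) topology on the space of closed subgroups of `G`. -/
def chabautyTopology (G : Type*) [Group G] [TopologicalSpace G] :
    TopologicalSpace (ChabautySpace G) :=
  TopologicalSpace.generateFrom
    ({S | ∃ K : Set G, IsCompact K ∧ S = {H : ChabautySpace G | ((H.1 : Set G) ∩ K) = ∅}} ∪
      {S | ∃ U : Set G, IsOpen U ∧ S = {H : ChabautySpace G | ((H.1 : Set G) ∩ U).Nonempty}})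

namespace Stmt16Aux

variable {V : Type*} {G : SimpleGraph V}

/-- The set of automorphisms agreeing with `g` on `F`. -/
def agreeSet (g : G ≃g G) (F : Set V) : Set (G ≃g G) := {g' | ∀ x ∈ F, g' x = g x}

lemma self_mem_agreeSet (g : G ≃g G) (F : Set V) : g ∈ agreeSet g F := fun _ _ => rfl

lemma iso_dist_le (hconn : G.Connected) (e : G ≃g G) (x y : V) :
    G.dist (e x) (e y) ≤ G.dist x y := by
  obtain ⟨p, hp⟩ := hconn.exists_walk_length_eq_dist x y
  calc G.dist (e x) (e y) ≤ (p.map e.toHom).length := SimpleGraph.dist_le _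
    _ = p.length := p.length_map _
    _ = G.dist x y := hp

lemma iso_dist (hconn : G.Connected) (e : G ≃g G) (x y : V) :
    G.dist (e x) (e y) = G.dist x y := by
  refine le_antisymm (iso_dist_le hconn e x y) ?_
  have := iso_dist_le hconn e.symm (e x) (e y)
  simpa using this

lemma ball_finite (hlf : ∀ v : V, (G.neighborSet v).Finite) (hconn : G.Connected)
    (v : V) (n : ℕ) : {y | G.dist v y ≤ n}.Finite := by
  induction n with
  | zero =>
    refine Set.Finite.subset (Set.finite_singleton v) ?_
    intro y hy
    simp only [Set.mem_setOf_eq, Nat.le_zero] at hy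
    exact Set.mem_singleton_iff.2 ((hconn.dist_eq_zero_iff.mp hy)).symm
  | succ n ih =>
    refine Set.Finite.subset (ih.union (ih.biUnion (fun z _ => hlf z))) ?_
    intro y hy
    simp only [Set.mem_setOf_eq] at hy
    by_cases h : G.dist v y ≤ n
    · exact Or.inl h
    · have hd : G.dist v y = n + 1 := le_antisymm hy (by omega)
      obtain ⟨p, hp⟩ := hconn.exists_walk_length_eq_dist v y
      right
      cases hq : p.reverse with
      | nil =>
        exfalso
        have := congrArg Walk.length hq
        rw [Walk.length_reverse] at this
        rw [hp, hd] at this; simp at this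
      | cons h' q =>
        rename_i z
        refine Set.mem_biUnion (x := z) ?_ h'.symm
        have hl := congrArg Walk.length hq
        rw [Walk.length_reverse] at hl
        simp only [Walk.length_cons, hp, hd] at hl
        have : G.dist v z ≤ q.reverse.length := SimpleGraph.dist_le _
        simp only [Set.mem_setOf_eq, Walk.length_reverse] at this ⊢
        omega

lemma isOpen_agreeSet (g : G ≃g G) (F : Set V) (hF : F.Finite) : IsOpen (agreeSet g F) := by
  letI : TopologicalSpace V := ⊥
  haveI : DiscreteTopology V := ⟨rfl⟩
  have : agreeSet g F = (fun g' : G ≃g G => (g' : V → V)) ⁻¹' (F.pi fun x => {g x}) := by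
    ext g'; simp [agreeSet, Set.mem_pi]
  rw [this]
  exact (isOpen_set_pi hF fun x _ => isOpen_discrete _).preimage continuous_induced_dom

lemma exists_agree_subset {U : Set (G ≃g G)} (hU : IsOpen U) {g : G ≃g G} (hg : g ∈ U) :
    ∃ F : Set V, F.Finite ∧ agreeSet g F ⊆ U := by
  letI : TopologicalSpace V := ⊥
  obtain ⟨t, ht, rfl⟩ := isOpen_induced_iff.mp hU
  obtain ⟨I, u, hu, hsub⟩ := isOpen_pi_iff.mp ht _ hg
  refine ⟨(I : Set V), I.finite_toSet, fun g' hg' => ?_⟩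
  refine hsub fun x hx => ?_
  show g' x ∈ u x
  rw [hg' x hx]
  exact (hu x hx).2

lemma isCompact_agreeSet (hlf : ∀ v : V, (G.neighborSet v).Finite) (hconn : G.Connected)
    (g : G ≃g G) {F : Set V} (hF : F.Finite) {v : V} (hvF : v ∈ F) :
    IsCompact (agreeSet g F) := by
  letI : TopologicalSpace V := ⊥
  haveI : DiscreteTopology V := ⟨rfl⟩
  have hind : Topology.IsInducing (fun g' : G ≃g G => (g' : V → V)) := ⟨rfl⟩
  rw [hind.isCompact_iff]
  have himg : (fun g' : G ≃g G => (g' : V → V)) '' agreeSet g F =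
      {f : V → V | (∀ x y, G.dist (f x) (f y) = G.dist x y) ∧
        (∀ x y, (G.Adj (f x) (f y) ↔ G.Adj x y)) ∧ (∀ x ∈ F, f x = g x) ∧
        (∀ y, ∃ x, G.dist v x = G.dist (g v) y ∧ f x = y)} := by
    apply Set.Subset.antisymm
    · rintro _ ⟨e, he, rfl⟩
      refine ⟨fun x y => iso_dist hconn e x y, fun x y => e.map_rel_iff, he, fun y => ?_⟩
      refine ⟨e.symm y, ?_, e.apply_symm_apply y⟩
      have h2 : G.dist (e v) (e (e.symm y)) = G.dist v (e.symm y) := iso_dist hconn e _ _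
      rw [e.apply_symm_apply] at h2
      rw [← h2, he v hvF]
    · rintro f ⟨h1, h2, h3, h4⟩
      have hinj : Function.Injective f := by
        intro x y hxy
        have hd := h1 x y
        rw [hxy, SimpleGraph.dist_self] at hd
        exact hconn.dist_eq_zero_iff.mp hd.symm
      have hsurj : Function.Surjective f := fun y => by
        obtain ⟨x, _, hx⟩ := h4 y; exact ⟨x, hx⟩
      exact ⟨⟨Equiv.ofBijective f ⟨hinj, hsurj⟩, h2 _ _⟩, h3, rfl⟩
  rw [himg]
  have hT : IsCompact {f : V → V | ∀ x, f x ∈ {y | G.dist (g v) y ≤ G.dist v x}} :=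
    isCompact_pi_infinite fun x => (ball_finite hlf hconn (g v) (G.dist v x)).isCompact
  refine hT.of_isClosed_subset ?_ ?_
  · simp only [Set.setOf_and]
    refine IsClosed.inter ?_ (IsClosed.inter ?_ (IsClosed.inter ?_ ?_))
    · rw [Set.setOf_forall]
      refine isClosed_iInter fun x => ?_
      rw [Set.setOf_forall]
      refine isClosed_iInter fun y => ?_
      have hrw : {f : V → V | G.dist (f x) (f y) = G.dist x y} =
          (fun f : V → V => (f x, f y)) ⁻¹' {p : V × V | G.dist p.1 p.2 = G.dist x y} := rfl
      rw [hrw]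
      exact IsClosed.preimage ((continuous_apply x).prodMk (continuous_apply y))
        (isClosed_discrete _)
    · rw [Set.setOf_forall]
      refine isClosed_iInter fun x => ?_
      rw [Set.setOf_forall]
      refine isClosed_iInter fun y => ?_
      have hrw : {f : V → V | G.Adj (f x) (f y) ↔ G.Adj x y} =
          (fun f : V → V => (f x, f y)) ⁻¹' {p : V × V | G.Adj p.1 p.2 ↔ G.Adj x y} := rfl
      rw [hrw]
      exact IsClosed.preimage ((continuous_apply x).prodMk (continuous_apply y))
        (isClosed_discrete _)
    · rw [Set.setOf_forall]
      refine isClosed_iInter fun x => ?_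
      rw [Set.setOf_forall]
      refine isClosed_iInter fun hx => ?_
      have hrw : {f : V → V | f x = g x} =
          (fun f : V → V => f x) ⁻¹' {g x} := rfl
      rw [hrw]
      exact IsClosed.preimage (continuous_apply x) (isClosed_discrete _)
    · rw [Set.setOf_forall]
      refine isClosed_iInter fun y => ?_
      have hfin : {x | G.dist v x = G.dist (g v) y}.Finite :=
        (ball_finite hlf hconn v (G.dist (g v) y)).subset (fun x hx => le_of_eq hx)
      have heq : {f : V → V | ∃ x, G.dist v x = G.dist (g v) y ∧ f x = y}
          = ⋃ x ∈ {x | G.dist v x = G.dist (g v) y}, {f : V → V | f x = y} := by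
        ext f
        simp only [Set.mem_setOf_eq, Set.mem_iUnion, exists_prop]
      rw [heq]
      refine hfin.isClosed_biUnion fun x _ => ?_
      have hrw : {f : V → V | f x = y} =
          (fun f : V → V => f x) ⁻¹' {y} := rfl
      rw [hrw]
      exact IsClosed.preimage (continuous_apply x) (isClosed_discrete _)
  · rintro f ⟨h1, _, h3, _⟩ x
    have hfv : f v = g v := h3 v hvF
    have hd := h1 v x
    rw [hfv] at hd
    simp only [Set.mem_setOf_eq]
    exact le_of_eq hd

end Stmt16Aux

open Stmt16Aux in
/-- Let `Λ` be a locally finite connected graph, `Hₙ → H` and `Lₙ → L` two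
Chabauty-convergent sequences of closed subgroups of `Aut(Λ)` with `Lₙ ≤ Hₙ` for each
`n`.  Suppose there is `C > 0` such that each `Hₙ` acts with at most `C` orbits of
vertices, and `S ≥ 1` such that `[Hₙ : Lₙ] ≤ S` for each `n`.  Then `L ≤ H` and
`[H : L] ≤ S`. -/
theorem stmt_16 {V : Type*} (G : SimpleGraph V)
    (hlf : ∀ v : V, (G.neighborSet v).Finite) (hconn : G.Connected)
    (Hn Ln : ℕ → ChabautySpace (G ≃g G)) (H L : ChabautySpace (G ≃g G))
    (hHconv : Filter.Tendsto Hn Filter.atTop (@nhds _ (chabautyTopology (G ≃g G)) H))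
    (hLconv : Filter.Tendsto Ln Filter.atTop (@nhds _ (chabautyTopology (G ≃g G)) L))
    (hle : ∀ n, (Ln n).1 ≤ (Hn n).1)
    (C : ℕ) (hC : 0 < C)
    (horb : ∀ n, ∃ s : Finset V, s.card ≤ C ∧ ∀ v : V, ∃ h ∈ (Hn n).1, h v ∈ s)
    (S : ℕ) (hS : 1 ≤ S)
    (hidx : ∀ n, (Ln n).1.relIndex (Hn n).1 ≠ 0 ∧ (Ln n).1.relIndex (Hn n).1 ≤ S) :
    L.1 ≤ H.1 ∧ L.1.relIndex H.1 ≠ 0 ∧ L.1.relIndex H.1 ≤ S := by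
  classical
  letI : TopologicalSpace (ChabautySpace (G ≃g G)) := chabautyTopology (G ≃g G)
  -- convergence consequences
  have copen : ∀ (Mn : ℕ → ChabautySpace (G ≃g G)) (M : ChabautySpace (G ≃g G)),
      Filter.Tendsto Mn Filter.atTop (nhds M) → ∀ U : Set (G ≃g G), IsOpen U →
      ((M.1 : Set (G ≃g G)) ∩ U).Nonempty →
      ∀ᶠ n in Filter.atTop, (((Mn n).1 : Set (G ≃g G)) ∩ U).Nonempty := by
    intro Mn M hconv U hU hne
    have hO : IsOpen {H' : ChabautySpace (G ≃g G) | ((H'.1 : Set (G ≃g G)) ∩ U).Nonempty} :=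
      TopologicalSpace.isOpen_generateFrom_of_mem (Or.inr ⟨U, hU, rfl⟩)
    exact hconv.eventually (hO.mem_nhds hne)
  have ccompact : ∀ (Mn : ℕ → ChabautySpace (G ≃g G)) (M : ChabautySpace (G ≃g G)),
      Filter.Tendsto Mn Filter.atTop (nhds M) → ∀ K : Set (G ≃g G), IsCompact K →
      ((M.1 : Set (G ≃g G)) ∩ K) = ∅ →
      ∀ᶠ n in Filter.atTop, (((Mn n).1 : Set (G ≃g G)) ∩ K) = ∅ := by
    intro Mn M hconv K hK hdisj
    have hO : IsOpen {H' : ChabautySpace (G ≃g G) | ((H'.1 : Set (G ≃g G)) ∩ K) = ∅} :=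
      TopologicalSpace.isOpen_generateFrom_of_mem (Or.inl ⟨K, hK, rfl⟩)
    exact hconv.eventually (hO.mem_nhds hdisj)
  -- separating a non-member from a closed subgroup
  have disj : ∀ (M : ChabautySpace (G ≃g G)) (g : G ≃g G) (v : V), g ∉ M.1 →
      ∃ F : Set V, F.Finite ∧ v ∈ F ∧ agreeSet g F ∩ (M.1 : Set (G ≃g G)) = ∅ := by
    intro M g v hg
    have hopen : IsOpen ((M.1 : Set (G ≃g G))ᶜ) := M.2.isOpen_compl
    obtain ⟨F, hFfin, hFsub⟩ := exists_agree_subset hopen hg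
    refine ⟨insert v F, hFfin.insert v, Set.mem_insert v F, ?_⟩
    rw [Set.eq_empty_iff_forall_notMem]
    rintro x ⟨hx1, hx2⟩
    exact hFsub (fun y hy => hx1 y (Set.mem_insert_of_mem v hy)) hx2
  -- the key facts, proved separately when `V` is empty
  have key : L.1 ≤ H.1 ∧
      ∀ f : Fin (S + 1) → ↥H.1, ∃ i j, i ≠ j ∧ ((f i : G ≃g G))⁻¹ * (f j : G ≃g G) ∈ L.1 := by
    rcases isEmpty_or_nonempty V with hV | hV
    · haveI : Subsingleton (G ≃g G) := ⟨fun a b => DFunLike.ext a b fun x => isEmptyElim x⟩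
      constructor
      · intro g hg
        have hg1 : g = 1 := Subsingleton.elim g 1
        rw [hg1]; exact H.1.one_mem
      · intro f
        refine ⟨⟨0, by omega⟩, ⟨1, by omega⟩, Fin.ne_of_val_ne (by simp), ?_⟩
        have h1 : ((f ⟨0, by omega⟩ : G ≃g G))⁻¹ * (f ⟨1, by omega⟩ : G ≃g G) = 1 :=
          Subsingleton.elim _ 1
        rw [h1]; exact L.1.one_mem
    · obtain ⟨v⟩ := hV
      have part1 : L.1 ≤ H.1 := by
        intro g hg
        by_contra hgH
        obtain ⟨F, hFfin, hvF, hdisj⟩ := disj H g v hgH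
        have hK : IsCompact (agreeSet g F) := isCompact_agreeSet hlf hconn g hFfin hvF
        have hHev := ccompact Hn H hHconv _ hK (by rwa [Set.inter_comm] at hdisj)
        have hLev := copen Ln L hLconv _ (isOpen_agreeSet g F hFfin)
          ⟨g, hg, self_mem_agreeSet g F⟩
        obtain ⟨n, hn1, hn2⟩ := (hHev.and hLev).exists
        obtain ⟨x, hxL, hxA⟩ := hn2
        have hx : x ∈ ((Hn n).1 : Set (G ≃g G)) ∩ agreeSet g F := ⟨hle n hxL, hxA⟩
        rw [hn1] at hx
        exact hx
      refine ⟨part1, ?_⟩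
      intro f
      by_contra hcon
      push_neg at hcon
      -- the pairwise quotients
      set q : Fin (S + 1) → Fin (S + 1) → (G ≃g G) :=
        fun i j => ((f i : G ≃g G))⁻¹ * (f j : G ≃g G) with hq
      have hpair : ∀ i j : Fin (S + 1), ∃ F : Set V, F.Finite ∧ v ∈ F ∧
          (i ≠ j → agreeSet (q i j) F ∩ (L.1 : Set (G ≃g G)) = ∅) := by
        intro i j
        by_cases hij : i = j
        · exact ⟨{v}, Set.finite_singleton v, Set.mem_singleton v, fun h => absurd hij h⟩
        · obtain ⟨F, h1, h2, h3⟩ := disj L (q i j) v (hcon i j hij)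
          exact ⟨F, h1, h2, fun _ => h3⟩
      choose Fp hFpfin hvFp hFpdisj using hpair
      -- a large finite agreement set
      set A : Set V := ⋃ i, ⋃ j, (Fp i j ∪ (q i j) '' Fp i j) with hA
      have hAfin : A.Finite :=
        Set.finite_iUnion fun i => Set.finite_iUnion fun j =>
          ((hFpfin i j).union ((hFpfin i j).image _))
      have hFpA : ∀ i j, Fp i j ⊆ A := fun i j x hx =>
        Set.mem_iUnion.2 ⟨i, Set.mem_iUnion.2 ⟨j, Or.inl hx⟩⟩
      have hImA : ∀ i j, (q i j) '' Fp i j ⊆ A := fun i j x hx =>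
        Set.mem_iUnion.2 ⟨i, Set.mem_iUnion.2 ⟨j, Or.inr hx⟩⟩
      -- eventually conditions
      have E1 : ∀ᶠ n in Filter.atTop, ∀ i : Fin (S + 1),
          (((Hn n).1 : Set (G ≃g G)) ∩ agreeSet (f i : G ≃g G) A).Nonempty := by
        rw [Filter.eventually_all]
        intro i
        exact copen Hn H hHconv _ (isOpen_agreeSet _ A hAfin)
          ⟨(f i : G ≃g G), (f i).2, self_mem_agreeSet _ A⟩
      have E2 : ∀ᶠ n in Filter.atTop, ∀ i j : Fin (S + 1), i ≠ j →
          (((Ln n).1 : Set (G ≃g G)) ∩ agreeSet (q i j) (Fp i j)) = ∅ := by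
        rw [Filter.eventually_all]
        intro i
        rw [Filter.eventually_all]
        intro j
        by_cases hij : i = j
        · exact Filter.Eventually.of_forall fun n h => absurd hij h
        · have := ccompact Ln L hLconv _
            (isCompact_agreeSet hlf hconn (q i j) (hFpfin i j) (hvFp i j))
            (by rw [Set.inter_comm]; exact hFpdisj i j hij)
          exact this.mono fun n h _ => h
      obtain ⟨n, hn1, hn2⟩ := (E1.and E2).exists
      choose a ha using hn1
      -- approximants have pairwise quotients agreeing with `q i j` on `Fp i j`
      have hkey : ∀ i j : Fin (S + 1), (a i)⁻¹ * a j ∈ agreeSet (q i j) (Fp i j) := by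
        intro i j x hx
        have h1 : a j x = (f j : G ≃g G) x := (ha j).2 x (hFpA i j hx)
        have hyA : q i j x ∈ A := hImA i j (Set.mem_image_of_mem _ hx)
        have h2 : a i (q i j x) = (f i : G ≃g G) (q i j x) := (ha i).2 _ hyA
        have h3 : (f i : G ≃g G) (q i j x) = (f j : G ≃g G) x := by
          rw [hq]
          exact RelIso.apply_inv_self _ _
        show (a i)⁻¹ ((a j) x) = q i j x
        rw [h1, ← h3, ← h2]
        exact (a i).inv_apply_self _
      -- so the approximants lie in distinct `Ln n`-cosets of `Hn n`
      have hfin : Finite (↥(Hn n).1 ⧸ (Ln n).1.subgroupOf (Hn n).1) :=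
        Nat.finite_of_card_ne_zero (hidx n).1
      have hinj : Function.Injective (fun i : Fin (S + 1) =>
          (QuotientGroup.mk ⟨a i, (ha i).1⟩ :
            ↥(Hn n).1 ⧸ (Ln n).1.subgroupOf (Hn n).1)) := by
        intro i j hij
        by_contra hne
        have hmem := QuotientGroup.eq.mp hij
        rw [Subgroup.mem_subgroupOf] at hmem
        have hmem' : (a i)⁻¹ * a j ∈ (Ln n).1 := by
          simpa using hmem
        have : (a i)⁻¹ * a j ∈ ((Ln n).1 : Set (G ≃g G)) ∩ agreeSet (q i j) (Fp i j) :=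
          ⟨hmem', hkey i j⟩
        rw [hn2 i j hne] at this
        exact this
      have hcard := Nat.card_le_card_of_injective _ hinj
      have hrel : (Ln n).1.relIndex (Hn n).1 =
          Nat.card (↥(Hn n).1 ⧸ (Ln n).1.subgroupOf (Hn n).1) := rfl
      have hSn := (hidx n).2
      rw [hrel] at hSn
      simp only [Nat.card_eq_fintype_card, Fintype.card_fin] at hcard
      omega
  obtain ⟨hLH, claim⟩ := key
  refine ⟨hLH, ?_⟩
  -- the final counting argument
  have noinj : ∀ φ : Fin (S + 1) → (↥H.1 ⧸ L.1.subgroupOf H.1), ¬ Function.Injective φ := by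
    intro φ hφ
    have hout : ∀ i, ∃ h : ↥H.1, (QuotientGroup.mk h : ↥H.1 ⧸ L.1.subgroupOf H.1) = φ i :=
      fun i => ⟨(φ i).out, QuotientGroup.out_eq' _⟩
    choose f hf using hout
    obtain ⟨i, j, hij, hm⟩ := claim f
    apply hij
    apply hφ
    rw [← hf i, ← hf j]
    refine QuotientGroup.eq.mpr ?_
    rw [Subgroup.mem_subgroupOf]
    simpa using hm
  have hQfin : Finite (↥H.1 ⧸ L.1.subgroupOf H.1) := by
    by_contra h
    haveI := not_finite_iff_infinite.mp h
    exact noinj _ (Fin.valEmbedding.trans (Infinite.natEmbedding _)).injective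
  haveI := hQfin
  have hQne : Nonempty (↥H.1 ⧸ L.1.subgroupOf H.1) := ⟨QuotientGroup.mk 1⟩
  have h1 : L.1.relIndex H.1 = Nat.card (↥H.1 ⧸ L.1.subgroupOf H.1) := rfl
  constructor
  · rw [h1]
    exact Nat.card_ne_zero.mpr ⟨hQne, hQfin⟩
  · rw [h1]
    by_contra hgt
    push_neg at hgt
    haveI := Fintype.ofFinite (↥H.1 ⧸ L.1.subgroupOf H.1)
    rw [Nat.card_eq_fintype_card] at hgt
    obtain ⟨e⟩ := Function.Embedding.nonempty_of_card_le (α := Fin (S + 1))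
      (β := ↥H.1 ⧸ L.1.subgroupOf H.1) (by simpa using hgt)
    exact noinj e e.injective
end
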